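/- Let x ∈ l^2 have x_n ≥ 0 for all n. Then there exists exactly one global solution X of the inviscid dyadic model with X(0) = x, and this solution is a Leray-Hopf solution, i.e. E(t) ≤ E(s) for all 0 ≤ s < t. -/

import Mathlib

open MeasureTheory Set Filter Topology

/-- `X` is a solution of the inviscid dyadic model on the time set `D`
(typically `Set.Ico 0 T` or `Set.Ici 0`), with coefficients `k` bounded by `C * 2 ^ n`.
The components of the solution are `X 1, X 2, ...`; by convention `X 0 ≡ 0` and `k 0 = 0`. -/
def IsDyadicSolutionOn (C : ℝ) (k : ℕ → ℝ) (X : ℕ → ℝ → ℝ) (D : Set ℝ) : Prop :=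
  0 < C ∧ k 0 = 0 ∧
  (∀ n : ℕ, 1 ≤ n → 0 ≤ k n ∧ k n ≤ C * 2 ^ n) ∧
  (∀ t : ℝ, X 0 t = 0) ∧
  (∀ n : ℕ, 1 ≤ n → ∀ t ∈ D, HasDerivWithinAt (X n)
      (k (n - 1) * X (n - 1) t ^ 2 - k n * X n t * X (n + 1) t) D t) ∧
  (∀ t ∈ D, Summable fun j : ℕ => X (j + 1) t ^ 2)

/-- The energy `E(t) = ∑_{j ≥ 1} X_j(t)^2`. -/
noncomputable def energy (X : ℕ → ℝ → ℝ) (t : ℝ) : ℝ :=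
  ∑' j : ℕ, X (j + 1) t ^ 2

/-- The function `a(t) = sup_{n ≥ 1} (- k_n X_{n+1}(t))`. -/
noncomputable def classKfun (k : ℕ → ℝ) (X : ℕ → ℝ → ℝ) (t : ℝ) : ℝ :=
  ⨆ n : ℕ, -(k (n + 1) * X (n + 2) t)

/-- A solution is of class `K` if `a(t) = sup_{n ≥ 1} (- k_n X_{n+1}(t))` is locally
integrable on `[0,∞)`. -/
def IsClassK (k : ℕ → ℝ) (X : ℕ → ℝ → ℝ) : Prop :=
  LocallyIntegrableOn (classKfun k X) (Set.Ici 0)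

/-!
Solutions with nonnegative data stay nonnegative (integrating factor for
`X_n' ≥ -k_n X_{n+1} X_n`), and then the energy flux `2 k_N X_N² X_{N+1}` out of the first `N`
shells is nonnegative, so the energy is nonincreasing and all components are bounded by
`√(E 0)`.

Uniqueness: for two nonnegative solutions the weighted distance `∑_{n ≤ N} 2⁻ⁿ (X_n - Y_n)²`
has derivative at most the flux `2⁻ᴺ k_N (X_N + Y_N)(X_N - Y_N)(X_{N+1} - Y_{N+1})`, which is
`O(|X_N - Y_N|)` uniformly in time; its time integral tends to `0` by dominated convergence.

Existence: the Galerkin truncations conserve energy, hence are global (Picard–Lindelöf for the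
field cut off radially outside the energy ball), and satisfy Taylor estimates in time that are
uniform in the truncation level. Compactness of `[-√(E 0), √(E 0)]` gives pointwise limits along
an ultrafilter, and the Taylor estimates pass to the limit, which therefore solves the full system.
-/

theorem abs_mul_sub_mul_le {a b c d ρ : ℝ} (hb : |b| ≤ ρ) (hc : |c| ≤ ρ) :
    |a * b - c * d| ≤ ρ * |a - c| + ρ * |b - d| := by
  calc |a * b - c * d| = |(a - c) * b + c * (b - d)| := by ring_nf
    _ ≤ |a - c| * |b| + |c| * |b - d| := by
        rw [← abs_mul, ← abs_mul]; exact abs_add_le _ _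
    _ ≤ ρ * |a - c| + ρ * |b - d| := by
        rw [mul_comm |a - c|]
        gcongr

/-- Integrating factor: `f * exp (∫₀ᵗ a)` is nondecreasing, so `f` keeps the sign of `f 0`. -/
theorem nonneg_of_hasDerivWithinAt_Ici {f f' a : ℝ → ℝ} (ha : ContinuousOn a (Ici 0))
    (hf : ∀ t ∈ Ici (0 : ℝ), HasDerivWithinAt f (f' t) (Ici 0) t)
    (hf' : ∀ t, 0 < t → -(a t * f t) ≤ f' t) (h0 : 0 ≤ f 0) {t : ℝ} (ht : 0 ≤ t) :
    0 ≤ f t := by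
  have hcont : Continuous fun s => a (max s 0) :=
    ha.comp_continuous (continuous_id.max continuous_const) fun s => le_max_right s 0
  set A : ℝ → ℝ := fun u => ∫ s in (0 : ℝ)..u, a (max s 0)
  have hA : ∀ u, HasDerivAt A (a (max u 0)) u := fun u =>
    hcont.integral_hasStrictDerivAt 0 u |>.hasDerivAt
  have hmono : MonotoneOn (fun u => f u * Real.exp (A u)) (Ici 0) := by
    refine monotoneOn_of_hasDerivWithinAt_nonneg (convex_Ici 0)
      (fun u hu => (hf u hu).continuousWithinAt.mul (hA u).continuousAt.rexp.continuousWithinAt)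
      (fun u hu => ?_) (fun u hu => ?_) (f' := fun u => (f' u + a u * f u) * Real.exp (A u))
    · rw [interior_Ici] at hu
      have := ((hf u (mem_Ici.2 hu.le)).hasDerivAt (Ici_mem_nhds hu)).mul (hA u).exp
      rw [max_eq_left hu.le] at this
      exact (this.congr_deriv (by ring)).hasDerivWithinAt
    · rw [interior_Ici] at hu
      have := hf' u hu
      have : 0 ≤ f' u + a u * f u := by linarith
      positivity
  have := hmono self_mem_Ici ht ht
  simp only [A, intervalIntegral.integral_same, Real.exp_zero, mul_one] at this
  exact (mul_nonneg_iff_of_pos_right (Real.exp_pos _)).mp (h0.trans this)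

theorem abs_sub_sub_mul_le_of_abs_deriv_sub_le {f f' : ℝ → ℝ} {D : Set ℝ} {K s t : ℝ}
    (hD : Convex ℝ D) (hf : ∀ u ∈ D, HasDerivWithinAt f (f' u) D u) (hK : 0 ≤ K)
    (hf' : ∀ u ∈ D, |f' u - f' s| ≤ K * |u - s|) (hs : s ∈ D) (ht : t ∈ D) :
    |f t - f s - (t - s) * f' s| ≤ K * |t - s| ^ 2 := by
  have hsub : uIcc s t ⊆ D := hD.ordConnected.uIcc_subset hs ht
  have hderiv : ∀ u ∈ uIcc s t,
      HasDerivWithinAt (fun u => f u - u * f' s) (f' u - f' s) (uIcc s t) u := fun u hu =>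
    ((hf u (hsub hu)).mono hsub).sub ((hasDerivWithinAt_id u _).mul_const (f' s))
      |>.congr_deriv (by rw [one_mul])
  have hbound : ∀ u ∈ uIcc s t, ‖f' u - f' s‖ ≤ K * |t - s| := fun u hu =>
    (hf' u (hsub hu)).trans (mul_le_mul_of_nonneg_left (abs_sub_left_of_mem_uIcc hu) hK)
  have h := (convex_uIcc s t).norm_image_sub_le_of_norm_hasDerivWithin_le hderiv hbound
    left_mem_uIcc right_mem_uIcc
  simp only [Real.norm_eq_abs] at h
  calc |f t - f s - (t - s) * f' s| = |f t - t * f' s - (f s - s * f' s)| := by ring_nf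
    _ ≤ K * |t - s| * |t - s| := h
    _ = K * |t - s| ^ 2 := by ring

theorem hasDerivWithinAt_of_abs_sub_sub_mul_le {f : ℝ → ℝ} {f' K : ℝ} {D : Set ℝ} {t : ℝ}
    (h : ∀ s ∈ D, |f s - f t - (s - t) * f'| ≤ K * |s - t| ^ 2) : HasDerivWithinAt f f' D t := by
  rw [hasDerivWithinAt_iff_isLittleO]
  refine Asymptotics.IsBigO.trans_isLittleO (g := fun s => ‖s - t‖ ^ 2) ?_
    ((Asymptotics.isLittleO_pow_sub_sub t one_lt_two).mono nhdsWithin_le_nhds)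
  refine Asymptotics.IsBigO.of_bound K (eventually_nhdsWithin_of_forall fun s hs => ?_)
  simpa only [Real.norm_eq_abs, smul_eq_mul, abs_pow, abs_abs] using h s hs

theorem exists_tendsto_of_eventually_abs_le {α : Type*} {U : Ultrafilter α} {f : α → ℝ} {M : ℝ}
    (h : ∀ᶠ a in U, |f a| ≤ M) : ∃ l, Tendsto f U (𝓝 l) := by
  obtain ⟨l, -, hl⟩ := isCompact_Icc.ultrafilter_le_nhds (U.map f) <| by
    rw [Ultrafilter.coe_map, le_principal_iff]
    exact h.mono fun a ha => abs_le.mp ha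
  exact ⟨l, hl⟩

theorem norm_le_sqrt_sum_sq {ι : Type*} [Fintype ι] (v : ι → ℝ) : ‖v‖ ≤ √(∑ i, v i ^ 2) :=
  (pi_norm_le_iff_of_nonneg (Real.sqrt_nonneg _)).2 fun i => by
    rw [Real.norm_eq_abs]
    exact Real.abs_le_sqrt (Finset.single_le_sum (fun j _ => sq_nonneg (v j)) (Finset.mem_univ i))

theorem sum_sq_eq_of_hasDerivWithinAt {ι : Type*} [Fintype ι] {γ : ℝ → ι → ℝ}
    {F : (ι → ℝ) → ι → ℝ} {s : Set ℝ} (hs : Convex ℝ s) (hF : ∀ v, ∑ i, v i * F v i = 0)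
    (hγ : ∀ t ∈ s, HasDerivWithinAt γ (F (γ t)) s t) {a b : ℝ} (ha : a ∈ s) (hb : b ∈ s) :
    ∑ i, γ b i ^ 2 = ∑ i, γ a i ^ 2 := by
  have hderiv : ∀ t ∈ s, HasDerivWithinAt (fun u => ∑ i, γ u i ^ 2) 0 s t := by
    intro t ht
    have h := HasDerivWithinAt.fun_sum (u := Finset.univ) fun i _ =>
      (hasDerivWithinAt_pi.1 (hγ t ht) i).pow 2
    have h0 : ∑ i, ((2 : ℕ) : ℝ) * γ t i ^ (2 - 1) * F (γ t) i = 0 := by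
      rw [← mul_zero (2 : ℝ), ← hF (γ t), Finset.mul_sum]
      exact Finset.sum_congr rfl fun i _ => by push_cast; ring
    rwa [h0] at h
  have h := hs.norm_image_sub_le_of_norm_hasDerivWithin_le hderiv (fun _ _ => norm_zero.le) ha hb
  rwa [zero_mul, norm_le_zero_iff, sub_eq_zero] at h

section RadialRetraction

variable {E : Type*} [NormedAddCommGroup E]

noncomputable def radialScale (ρ : ℝ) (v : E) : ℝ :=
  if ‖v‖ ≤ ρ then 1 else ρ / ‖v‖

variable {ρ : ℝ} {v w : E}

theorem radialScale_nonneg (hρ : 0 ≤ ρ) (v : E) : 0 ≤ radialScale ρ v := by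
  unfold radialScale; split_ifs <;> positivity

theorem radialScale_le_one (v : E) : radialScale ρ v ≤ 1 := by
  unfold radialScale
  split_ifs with h
  · exact le_rfl
  · exact div_le_one_of_le₀ (not_le.mp h).le (norm_nonneg v)

theorem radialScale_mul_norm (hρ : 0 ≤ ρ) (v : E) : radialScale ρ v * ‖v‖ = min ‖v‖ ρ := by
  unfold radialScale
  split_ifs with h
  · rw [one_mul, min_eq_left h]
  · rw [div_mul_cancel₀ _ (hρ.trans_lt (not_le.mp h)).ne', min_eq_right (not_le.mp h).le]

theorem radialScale_le_radialScale (hρ : 0 ≤ ρ) (h : ‖v‖ ≤ ‖w‖) :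
    radialScale ρ w ≤ radialScale ρ v := by
  unfold radialScale
  split_ifs with hw hv hv
  · exact le_rfl
  · exact absurd (h.trans hw) hv
  · exact div_le_one_of_le₀ (not_le.mp hw).le (norm_nonneg w)
  · exact div_le_div_of_nonneg_left hρ (hρ.trans_lt (not_le.mp hv)) h

variable [NormedSpace ℝ E]

noncomputable def radialRetraction (ρ : ℝ) (v : E) : E :=
  radialScale ρ v • v

theorem radialRetraction_of_norm_le (h : ‖v‖ ≤ ρ) : radialRetraction ρ v = v := by
  rw [radialRetraction, radialScale, if_pos h, one_smul]

theorem norm_radialRetraction_le (hρ : 0 ≤ ρ) (v : E) : ‖radialRetraction ρ v‖ ≤ ρ := by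
  rw [radialRetraction, norm_smul, Real.norm_of_nonneg (radialScale_nonneg hρ v),
    radialScale_mul_norm hρ]
  exact min_le_right _ _

theorem lipschitzWith_radialRetraction (hρ : 0 ≤ ρ) :
    LipschitzWith 2 (radialRetraction ρ : E → E) := by
  refine LipschitzWith.of_dist_le_mul fun v w => ?_
  wlog h : ‖v‖ ≤ ‖w‖ generalizing v w
  · rw [dist_comm, dist_comm v]
    exact this w v (le_of_not_ge h)
  set a := radialScale ρ v
  set b := radialScale ρ w
  have hb : 0 ≤ b := radialScale_nonneg hρ w
  have hab : b ≤ a := radialScale_le_radialScale hρ h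
  have hmin : a * ‖v‖ ≤ b * ‖w‖ := by
    rw [radialScale_mul_norm hρ, radialScale_mul_norm hρ]
    exact min_le_min_right ρ h
  have hvw : ‖w‖ - ‖v‖ ≤ ‖v - w‖ := by
    rw [norm_sub_rev]; exact norm_sub_norm_le w v
  have hb1 : b * (‖w‖ - ‖v‖) ≤ ‖w‖ - ‖v‖ :=
    mul_le_of_le_one_left (sub_nonneg.mpr h) (radialScale_le_one w)
  calc dist (radialRetraction ρ v) (radialRetraction ρ w)
      = ‖b • (v - w) + (a - b) • v‖ := by
        rw [dist_eq_norm]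
        show ‖a • v - b • w‖ = _
        rw [smul_sub, sub_smul]
        abel_nf
    _ ≤ b * ‖v - w‖ + (a - b) * ‖v‖ := by
        refine (norm_add_le _ _).trans ?_
        rw [norm_smul, norm_smul, Real.norm_of_nonneg hb, Real.norm_of_nonneg (sub_nonneg.mpr hab)]
    _ ≤ 1 * ‖v - w‖ + ‖v - w‖ := by
        gcongr
        · exact radialScale_le_one w
        · linarith
    _ = (2 : NNReal) * dist v w := by rw [dist_eq_norm]; push_cast; ring

end RadialRetraction

namespace DyadicModel

def dyadicField (k y : ℕ → ℝ) (n : ℕ) : ℝ :=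
  k (n - 1) * y (n - 1) ^ 2 - k n * y n * y (n + 1)

theorem sum_mul_dyadicField {k : ℕ → ℝ} (hk0 : k 0 = 0) (y : ℕ → ℝ) (N : ℕ) :
    ∑ j ∈ Finset.range N, y (j + 1) * dyadicField k y (j + 1)
      = -(k N * y N ^ 2 * y (N + 1)) := by
  have h := Finset.sum_range_sub' (fun j => k j * y j ^ 2 * y (j + 1)) N
  rw [hk0, zero_mul, zero_mul, zero_sub] at h
  rw [← h]
  refine Finset.sum_congr rfl fun j _ => ?_
  simp only [dyadicField, Nat.add_sub_cancel]
  ring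

theorem abs_dyadicField_sub_le {k y z : ℕ → ℝ} {n : ℕ} {K ρ δ : ℝ}
    (hk : ∀ ℓ ≤ n, |k ℓ| ≤ K) (hy : ∀ ℓ ≤ n + 1, |y ℓ| ≤ ρ) (hz : ∀ ℓ ≤ n + 1, |z ℓ| ≤ ρ)
    (hyz : ∀ ℓ ≤ n + 1, |y ℓ - z ℓ| ≤ δ) :
    |dyadicField k y n - dyadicField k z n| ≤ 4 * K * ρ * δ := by
  have hK : 0 ≤ K := (abs_nonneg _).trans (hk n le_rfl)
  have hρ : 0 ≤ ρ := (abs_nonneg _).trans (hy 0 (Nat.zero_le _))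
  have hδ : ∀ ℓ ≤ n + 1, ρ * |y ℓ - z ℓ| ≤ ρ * δ := fun ℓ hℓ =>
    mul_le_mul_of_nonneg_left (hyz ℓ hℓ) hρ
  have h₁ : |y (n - 1) * y (n - 1) - z (n - 1) * z (n - 1)| ≤ 2 * ρ * δ := by
    have := abs_mul_sub_mul_le (a := y (n - 1)) (d := z (n - 1))
      (hy (n - 1) (by omega)) (hz (n - 1) (by omega))
    linarith [hδ (n - 1) (by omega)]
  have h₂ : |y n * y (n + 1) - z n * z (n + 1)| ≤ 2 * ρ * δ := by
    have := abs_mul_sub_mul_le (a := y n) (d := z (n + 1)) (hy (n + 1) le_rfl) (hz n (by omega))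
    linarith [hδ n (by omega), hδ (n + 1) le_rfl]
  calc |dyadicField k y n - dyadicField k z n|
      = |k (n - 1) * (y (n - 1) * y (n - 1) - z (n - 1) * z (n - 1))
          - k n * (y n * y (n + 1) - z n * z (n + 1))| := by
        unfold dyadicField; ring_nf
    _ ≤ |k (n - 1)| * |y (n - 1) * y (n - 1) - z (n - 1) * z (n - 1)|
          + |k n| * |y n * y (n + 1) - z n * z (n + 1)| := by
        rw [← abs_mul, ← abs_mul]; exact abs_sub _ _
    _ ≤ K * (2 * ρ * δ) + K * (2 * ρ * δ) := by
        gcongr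
        exacts [hk _ (by omega), hk n le_rfl]
    _ = 4 * K * ρ * δ := by ring

theorem abs_dyadicField_le {k y : ℕ → ℝ} {n : ℕ} {K ρ : ℝ}
    (hk : ∀ ℓ ≤ n, |k ℓ| ≤ K) (hy : ∀ ℓ ≤ n + 1, |y ℓ| ≤ ρ) :
    |dyadicField k y n| ≤ 4 * K * ρ ^ 2 := by
  have hρ : 0 ≤ ρ := (abs_nonneg _).trans (hy 0 (Nat.zero_le _))
  have h := abs_dyadicField_sub_le (z := 0) (δ := ρ) hk hy (fun _ _ => by simpa using hρ)
    (fun ℓ hℓ => by simpa using hy ℓ hℓ)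
  simpa [dyadicField, pow_two, mul_assoc] using h

theorem tendsto_dyadicField {α : Type*} {l : Filter α} {y : α → ℕ → ℝ} {y₀ : ℕ → ℝ}
    (h : ∀ ℓ, Tendsto (fun a => y a ℓ) l (𝓝 (y₀ ℓ))) (k : ℕ → ℝ) (n : ℕ) :
    Tendsto (fun a => dyadicField k (y a) n) l (𝓝 (dyadicField k y₀ n)) :=
  (((h _).pow 2).const_mul _).sub (((h _).const_mul _).mul (h _))

/-- Setting `k n = 0` for `n ≥ N` decouples the shells beyond `N`, so that Galerkin
approximations are exact solutions for these coefficients. -/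
def truncateCoeff (N : ℕ) (k : ℕ → ℝ) (n : ℕ) : ℝ :=
  if n < N then k n else 0

theorem dyadicField_truncateCoeff {N n : ℕ} (h : n < N) (k y : ℕ → ℝ) :
    dyadicField (truncateCoeff N k) y n = dyadicField k y n := by
  simp only [dyadicField, truncateCoeff, if_pos h, if_pos ((Nat.sub_le n 1).trans_lt h)]

/-- The flux of the weighted distance `∑ₙ 2⁻ⁿ (yₙ - zₙ)²` from shell `n` to shell `n + 1`. -/
noncomputable def weightedFlux (k y z : ℕ → ℝ) (n : ℕ) : ℝ :=
  2⁻¹ ^ n * k n * (y n + z n) * ((y n - z n) * (y (n + 1) - z (n + 1)))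

noncomputable def weightedDissipation (k y z : ℕ → ℝ) (n : ℕ) : ℝ :=
  2⁻¹ ^ n * k n * (y (n + 1) + z (n + 1)) * (y n - z n) ^ 2

theorem sum_weighted_mul_dyadicField_sub {k : ℕ → ℝ} (hk0 : k 0 = 0) (y z : ℕ → ℝ) (N : ℕ) :
    ∑ j ∈ Finset.range N, 2⁻¹ ^ (j + 1) *
        (2 * (y (j + 1) - z (j + 1)) * (dyadicField k y (j + 1) - dyadicField k z (j + 1)))
      = -weightedFlux k y z N - ∑ j ∈ Finset.range N, weightedDissipation k y z (j + 1) := by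
  have hterm : ∀ j, 2⁻¹ ^ (j + 1) *
      (2 * (y (j + 1) - z (j + 1)) * (dyadicField k y (j + 1) - dyadicField k z (j + 1)))
      = weightedFlux k y z j - weightedFlux k y z (j + 1) - weightedDissipation k y z (j + 1) := by
    intro j
    simp only [dyadicField, weightedFlux, weightedDissipation, Nat.add_sub_cancel]
    ring
  rw [Finset.sum_congr rfl fun j _ => hterm j, Finset.sum_sub_distrib, Finset.sum_range_sub']
  simp [weightedFlux, hk0]

theorem abs_weightedFlux_le {k y z : ℕ → ℝ} {n : ℕ} {K M : ℝ} (hk : |k n| ≤ K * 2 ^ n)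
    (hy : ∀ ℓ, |y ℓ| ≤ M) (hz : ∀ ℓ, |z ℓ| ≤ M) :
    |weightedFlux k y z n| ≤ 4 * K * M ^ 2 * |y n - z n| := by
  have hk' : |2⁻¹ ^ n * k n| ≤ K := by
    rw [abs_mul, abs_of_pos (by positivity), inv_pow, inv_mul_le_iff₀ (by positivity), mul_comm]
    exact hk
  have hK : 0 ≤ K := (abs_nonneg _).trans hk'
  have hM : 0 ≤ M := (abs_nonneg _).trans (hy 0)
  have hsum : |y n + z n| ≤ 2 * M := (abs_add_le _ _).trans (by linarith [hy n, hz n])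
  have hdiff : |y (n + 1) - z (n + 1)| ≤ 2 * M :=
    (abs_sub _ _).trans (by linarith [hy (n + 1), hz (n + 1)])
  calc |weightedFlux k y z n|
      = |2⁻¹ ^ n * k n| * |y n + z n| * (|y n - z n| * |y (n + 1) - z (n + 1)|) := by
        simp only [weightedFlux, abs_mul]
    _ ≤ K * (2 * M) * (|y n - z n| * (2 * M)) := by gcongr
    _ = 4 * K * M ^ 2 * |y n - z n| := by ring

end DyadicModel

open DyadicModel

namespace IsDyadicSolutionOn

variable {C : ℝ} {k : ℕ → ℝ} {X Y : ℕ → ℝ → ℝ} {D : Set ℝ} {M : ℝ}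

theorem const_pos (hX : IsDyadicSolutionOn C k X D) : 0 < C := hX.1

theorem coeff_zero (hX : IsDyadicSolutionOn C k X D) : k 0 = 0 := hX.2.1

theorem coeff_nonneg (hX : IsDyadicSolutionOn C k X D) (n : ℕ) : 0 ≤ k n := by
  rcases n.eq_zero_or_pos with rfl | hn
  · exact hX.coeff_zero.ge
  · exact (hX.2.2.1 n hn).1

theorem abs_coeff_le (hX : IsDyadicSolutionOn C k X D) {ℓ n : ℕ} (h : ℓ ≤ n) :
    |k ℓ| ≤ C * 2 ^ n := by
  rw [abs_of_nonneg (hX.coeff_nonneg ℓ)]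
  have hC := hX.const_pos
  rcases ℓ.eq_zero_or_pos with rfl | hℓ
  · rw [hX.coeff_zero]; positivity
  · exact (hX.2.2.1 ℓ hℓ).2.trans (by gcongr; norm_num)

theorem apply_zero (hX : IsDyadicSolutionOn C k X D) (t : ℝ) : X 0 t = 0 := hX.2.2.2.1 t

theorem hasDerivWithinAt (hX : IsDyadicSolutionOn C k X D) {n : ℕ} (hn : 0 < n) {t : ℝ}
    (ht : t ∈ D) : HasDerivWithinAt (X n) (dyadicField k (X · t) n) D t :=
  hX.2.2.2.2.1 n hn t ht

theorem summable (hX : IsDyadicSolutionOn C k X D) {t : ℝ} (ht : t ∈ D) :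
    Summable fun j => X (j + 1) t ^ 2 :=
  hX.2.2.2.2.2 t ht

theorem continuousOn (hX : IsDyadicSolutionOn C k X D) (n : ℕ) : ContinuousOn (X n) D := by
  rcases n.eq_zero_or_pos with rfl | hn
  · rw [show X 0 = fun _ => 0 from funext hX.apply_zero]
    exact continuousOn_const
  · exact fun t ht => (hX.hasDerivWithinAt hn ht).continuousWithinAt

theorem hasDerivAt (hX : IsDyadicSolutionOn C k X D) {n : ℕ} (hn : 0 < n) {t : ℝ}
    (ht : D ∈ 𝓝 t) : HasDerivAt (X n) (dyadicField k (X · t) n) t :=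
  (hX.hasDerivWithinAt hn (mem_of_mem_nhds ht)).hasDerivAt ht

theorem sq_le_energy (hX : IsDyadicSolutionOn C k X D) {t : ℝ} (ht : t ∈ D) (n : ℕ) :
    X n t ^ 2 ≤ energy X t := by
  rcases n.eq_zero_or_pos with rfl | hn
  · rw [hX.apply_zero, sq, zero_mul]
    exact tsum_nonneg fun j => sq_nonneg _
  · obtain ⟨m, rfl⟩ := Nat.exists_eq_add_of_le' hn
    exact (hX.summable ht).le_tsum m fun j _ => sq_nonneg _

theorem nonneg (hX : IsDyadicSolutionOn C k X (Ici 0)) (h0 : ∀ n, 0 ≤ X n 0) (n : ℕ) {t : ℝ}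
    (ht : 0 ≤ t) : 0 ≤ X n t := by
  rcases n.eq_zero_or_pos with rfl | hn
  · rw [hX.apply_zero]
  refine nonneg_of_hasDerivWithinAt_Ici (a := fun s => k n * X (n + 1) s)
    ((hX.continuousOn (n + 1)).const_smul (k n)) (fun s hs => hX.hasDerivWithinAt hn hs)
    (fun s _ => ?_) (h0 n) ht
  have := mul_nonneg (hX.coeff_nonneg (n - 1)) (sq_nonneg (X (n - 1) s))
  simp only [dyadicField]
  linarith

theorem hasDerivWithinAt_sum_range_sq (hX : IsDyadicSolutionOn C k X D) (N : ℕ) {t : ℝ}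
    (ht : t ∈ D) :
    HasDerivWithinAt (fun u => ∑ j ∈ Finset.range N, X (j + 1) u ^ 2)
      (-(2 * (k N * X N t ^ 2 * X (N + 1) t))) D t := by
  have h : -(2 * (k N * X N t ^ 2 * X (N + 1) t))
      = ∑ j ∈ Finset.range N, 2 * (X (j + 1) t * dyadicField k (X · t) (j + 1)) := by
    rw [← Finset.mul_sum, sum_mul_dyadicField hX.coeff_zero (X · t) N, mul_neg]
  rw [h]
  refine HasDerivWithinAt.fun_sum fun j _ => ?_
  exact ((hX.hasDerivWithinAt j.succ_pos ht).pow 2).congr_deriv (by ring)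

theorem energy_antitoneOn (hX : IsDyadicSolutionOn C k X D) (hD : Convex ℝ D)
    (hpos : ∀ n, ∀ t ∈ D, 0 ≤ X n t) : AntitoneOn (energy X) D := by
  intro s hs t ht hst
  have hpartial : ∀ N, AntitoneOn (fun u => ∑ j ∈ Finset.range N, X (j + 1) u ^ 2) D := by
    intro N
    refine antitoneOn_of_hasDerivWithinAt_nonpos hD
      (continuousOn_finsetSum _ fun j _ => (hX.continuousOn (j + 1)).pow 2)
      (fun u hu => (hX.hasDerivWithinAt_sum_range_sq N (interior_subset hu)).mono
        interior_subset) (fun u hu => ?_)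
    have := hX.coeff_nonneg N
    have := hpos (N + 1) u (interior_subset hu)
    have : 0 ≤ k N * X N u ^ 2 * X (N + 1) u := by positivity
    linarith
  refine (hX.summable ht).tsum_le_of_sum_range_le fun N => ?_
  exact (hpartial N hs ht hst).trans <|
    (hX.summable hs).sum_le_tsum _ fun j _ => sq_nonneg _

theorem abs_le_sqrt_energy_zero (hX : IsDyadicSolutionOn C k X (Ici 0))
    (hpos : ∀ n, ∀ t ∈ Ici (0 : ℝ), 0 ≤ X n t) (n : ℕ) {t : ℝ} (ht : 0 ≤ t) :
    |X n t| ≤ √(energy X 0) :=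
  Real.abs_le_sqrt <| (hX.sq_le_energy ht n).trans <|
    hX.energy_antitoneOn (convex_Ici 0) hpos self_mem_Ici ht ht

theorem tendsto_atTop_zero (hX : IsDyadicSolutionOn C k X D) {t : ℝ} (ht : t ∈ D) :
    Tendsto (fun n => X n t) atTop (𝓝 0) := by
  have h := (hX.summable ht).tendsto_atTop_zero.sqrt
  simp only [Real.sqrt_sq_eq_abs, Real.sqrt_zero] at h
  exact (tendsto_add_atTop_iff_nat 1).mp ((tendsto_zero_iff_abs_tendsto_zero _).mpr h)

theorem hasDerivAt_sum_weighted_sq_sub (hX : IsDyadicSolutionOn C k X D)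
    (hY : IsDyadicSolutionOn C k Y D) (N : ℕ) {t : ℝ} (ht : D ∈ 𝓝 t) :
    HasDerivAt (fun u => ∑ j ∈ Finset.range N, 2⁻¹ ^ (j + 1) * (X (j + 1) u - Y (j + 1) u) ^ 2)
      (-weightedFlux k (X · t) (Y · t) N
        - ∑ j ∈ Finset.range N, weightedDissipation k (X · t) (Y · t) (j + 1)) t := by
  rw [← sum_weighted_mul_dyadicField_sub hX.coeff_zero]
  refine HasDerivAt.fun_sum fun j _ => ?_
  exact (((hX.hasDerivAt (n := j + 1) j.succ_pos ht).sub
    (hY.hasDerivAt (n := j + 1) j.succ_pos ht)).pow 2).const_mul _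
    |>.congr_deriv (by simp only [Pi.sub_apply]; ring)

theorem sum_weighted_sq_sub_le_integral (hX : IsDyadicSolutionOn C k X (Ici 0))
    (hY : IsDyadicSolutionOn C k Y (Ici 0)) (hXpos : ∀ n, ∀ t ∈ Ici (0 : ℝ), 0 ≤ X n t)
    (hYpos : ∀ n, ∀ t ∈ Ici (0 : ℝ), 0 ≤ Y n t) (h0 : ∀ n, X n 0 = Y n 0) (N : ℕ) {t : ℝ}
    (ht : 0 ≤ t) :
    ∑ j ∈ Finset.range N, 2⁻¹ ^ (j + 1) * (X (j + 1) t - Y (j + 1) t) ^ 2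
      ≤ ∫ s in (0 : ℝ)..t, |weightedFlux k (X · s) (Y · s) N| := by
  have hXc := fun n => (hX.continuousOn n).mono (Icc_subset_Ici_self : Icc 0 t ⊆ Ici 0)
  have hYc := fun n => (hY.continuousOn n).mono (Icc_subset_Ici_self : Icc 0 t ⊆ Ici 0)
  have hcont : ContinuousOn
      (fun u => ∑ j ∈ Finset.range N, 2⁻¹ ^ (j + 1) * (X (j + 1) u - Y (j + 1) u) ^ 2)
      (Icc 0 t) := by
    fun_prop
  have hderiv : ∀ s ∈ Ioo 0 t, HasDerivWithinAt
      (fun u => ∑ j ∈ Finset.range N, 2⁻¹ ^ (j + 1) * (X (j + 1) u - Y (j + 1) u) ^ 2)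
      (-weightedFlux k (X · s) (Y · s) N
        - ∑ j ∈ Finset.range N, weightedDissipation k (X · s) (Y · s) (j + 1)) (Ioi s) s :=
    fun s hs => (hX.hasDerivAt_sum_weighted_sq_sub hY N (Ici_mem_nhds hs.1)).hasDerivWithinAt
  have hint : IntegrableOn (fun s => |weightedFlux k (X · s) (Y · s) N|) (Icc 0 t) := by
    refine ContinuousOn.integrableOn_Icc ?_
    simp only [weightedFlux]
    fun_prop
  have hbound : ∀ s ∈ Ioo 0 t, -weightedFlux k (X · s) (Y · s) N
      - ∑ j ∈ Finset.range N, weightedDissipation k (X · s) (Y · s) (j + 1)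
      ≤ |weightedFlux k (X · s) (Y · s) N| := by
    intro s hs
    have hdiss : 0 ≤ ∑ j ∈ Finset.range N, weightedDissipation k (X · s) (Y · s) (j + 1) := by
      refine Finset.sum_nonneg fun j _ => ?_
      have := hX.coeff_nonneg (j + 1)
      have := hXpos (j + 2) s hs.1.le
      have := hYpos (j + 2) s hs.1.le
      simp only [weightedDissipation]
      positivity
    linarith [neg_abs_le (weightedFlux k (X · s) (Y · s) N)]
  simpa [h0] using intervalIntegral.sub_le_integral_of_hasDeriv_right_of_le ht hcont hderiv hint
    hbound

theorem tendsto_integral_abs_weightedFlux (hX : IsDyadicSolutionOn C k X (Ici 0))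
    (hY : IsDyadicSolutionOn C k Y (Ici 0)) (hXpos : ∀ n, ∀ t ∈ Ici (0 : ℝ), 0 ≤ X n t)
    (hYpos : ∀ n, ∀ t ∈ Ici (0 : ℝ), 0 ≤ Y n t) {t : ℝ} (ht : 0 ≤ t) :
    Tendsto (fun N => ∫ s in (0 : ℝ)..t, |weightedFlux k (X · s) (Y · s) N|) atTop (𝓝 0) := by
  set M := max √(energy X 0) √(energy Y 0)
  have hXM : ∀ n, ∀ s ∈ Ici (0 : ℝ), |X n s| ≤ M := fun n s hs =>
    (hX.abs_le_sqrt_energy_zero hXpos n hs).trans (le_max_left _ _)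
  have hYM : ∀ n, ∀ s ∈ Ici (0 : ℝ), |Y n s| ≤ M := fun n s hs =>
    (hY.abs_le_sqrt_energy_zero hYpos n hs).trans (le_max_right _ _)
  have hflux : ∀ N, ∀ s ∈ Ici (0 : ℝ),
      |weightedFlux k (X · s) (Y · s) N| ≤ 4 * C * M ^ 2 * |X N s - Y N s| := fun N s hs =>
    abs_weightedFlux_le (hX.abs_coeff_le le_rfl) (hXM · s hs) (hYM · s hs)
  have hC := hX.const_pos
  have hbound : ∀ N, ∀ s ∈ Ici (0 : ℝ),
      |weightedFlux k (X · s) (Y · s) N| ≤ 4 * C * M ^ 2 * (2 * M) := fun N s hs =>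
    (hflux N s hs).trans <| by
      gcongr
      exact (abs_sub _ _).trans (by linarith [hXM N s hs, hYM N s hs])
  have hsub : uIoc 0 t ⊆ Ici (0 : ℝ) := by
    rw [uIoc_of_le ht]
    exact Ioc_subset_Icc_self.trans Icc_subset_Ici_self
  have hcont : ∀ N, ContinuousOn (fun s => |weightedFlux k (X · s) (Y · s) N|) (Ici 0) := by
    have := hX.continuousOn
    have := hY.continuousOn
    intro N
    simp only [weightedFlux]
    fun_prop
  have hlim : ∀ s ∈ Ici (0 : ℝ),
      Tendsto (fun N => |weightedFlux k (X · s) (Y · s) N|) atTop (𝓝 0) := by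
    intro s hs
    have h := (((hX.tendsto_atTop_zero hs).sub (hY.tendsto_atTop_zero hs)).abs).const_mul
      (4 * C * M ^ 2)
    rw [sub_zero, abs_zero, mul_zero] at h
    exact squeeze_zero (fun N => abs_nonneg _) (fun N => hflux N s hs) h
  simpa using intervalIntegral.tendsto_integral_filter_of_dominated_convergence _
    (.of_forall fun N => ((hcont N).mono hsub).aestronglyMeasurable measurableSet_uIoc)
    (.of_forall fun N => ae_of_all _ fun s hs => by
      rw [Real.norm_eq_abs, abs_abs]; exact hbound N s (hsub hs))
    intervalIntegrable_const (ae_of_all _ fun s hs => hlim s (hsub hs))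

theorem eq_of_nonneg (hX : IsDyadicSolutionOn C k X (Ici 0))
    (hY : IsDyadicSolutionOn C k Y (Ici 0)) (h0 : ∀ n, X n 0 = Y n 0) (hpos : ∀ n, 0 ≤ X n 0)
    (n : ℕ) {t : ℝ} (ht : 0 ≤ t) : X n t = Y n t := by
  have hXpos : ∀ n, ∀ t ∈ Ici (0 : ℝ), 0 ≤ X n t := fun n t ht => hX.nonneg hpos n ht
  have hYpos : ∀ n, ∀ t ∈ Ici (0 : ℝ), 0 ≤ Y n t := fun n t ht =>
    hY.nonneg (fun n => h0 n ▸ hpos n) n ht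
  rcases n with _ | m
  · rw [hX.apply_zero, hY.apply_zero]
  have hle : 2⁻¹ ^ (m + 1) * (X (m + 1) t - Y (m + 1) t) ^ 2 ≤ 0 := by
    refine ge_of_tendsto (tendsto_integral_abs_weightedFlux hX hY hXpos hYpos ht) ?_
    filter_upwards [eventually_gt_atTop m] with N hN
    refine le_trans ?_ (sum_weighted_sq_sub_le_integral hX hY hXpos hYpos h0 N ht)
    exact Finset.single_le_sum (f := fun j => 2⁻¹ ^ (j + 1) * (X (j + 1) t - Y (j + 1) t) ^ 2)
      (fun j _ => by positivity) (Finset.mem_range.2 hN)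
  have hsq : (X (m + 1) t - Y (m + 1) t) ^ 2 = 0 :=
    le_antisymm (nonpos_of_mul_nonpos_right hle (by positivity)) (sq_nonneg _)
  exact sub_eq_zero.mp (pow_eq_zero_iff two_ne_zero |>.mp hsq)

theorem abs_sub_le_of_abs_le (hX : IsDyadicSolutionOn C k X D) (hD : Convex ℝ D)
    (hM : ∀ ℓ, ∀ t ∈ D, |X ℓ t| ≤ M) (n : ℕ) {s t : ℝ} (hs : s ∈ D) (ht : t ∈ D) :
    |X n t - X n s| ≤ 4 * C * 2 ^ n * M ^ 2 * |t - s| := by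
  have hC := hX.const_pos
  rcases n.eq_zero_or_pos with rfl | hn
  · rw [hX.apply_zero, hX.apply_zero, sub_zero, abs_zero]; positivity
  have h := hD.norm_image_sub_le_of_norm_hasDerivWithin_le
    (fun r hr => hX.hasDerivWithinAt hn hr)
    (fun r hr => (Real.norm_eq_abs _).trans_le <|
      abs_dyadicField_le (fun ℓ hℓ => hX.abs_coeff_le hℓ) (fun ℓ _ => hM ℓ r hr)) hs ht
  simp only [Real.norm_eq_abs] at h
  linarith

theorem abs_sub_sub_mul_dyadicField_le (hX : IsDyadicSolutionOn C k X D) (hD : Convex ℝ D)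
    (hM : ∀ ℓ, ∀ t ∈ D, |X ℓ t| ≤ M) {n : ℕ} (hn : 0 < n) {s t : ℝ} (hs : s ∈ D) (ht : t ∈ D) :
    |X n t - X n s - (t - s) * dyadicField k (X · s) n|
      ≤ 32 * C ^ 2 * 4 ^ n * M ^ 3 * |t - s| ^ 2 := by
  have hC := hX.const_pos
  have hM0 : 0 ≤ M := (abs_nonneg _).trans (hM 0 s hs)
  refine abs_sub_sub_mul_le_of_abs_deriv_sub_le hD (fun r hr => hX.hasDerivWithinAt hn hr)
    (by positivity) (fun r hr => ?_) hs ht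
  have hdiff : ∀ ℓ ≤ n + 1, |X ℓ r - X ℓ s| ≤ 4 * C * 2 ^ (n + 1) * M ^ 2 * |r - s| :=
    fun ℓ hℓ => (hX.abs_sub_le_of_abs_le hD hM ℓ hs hr).trans <| by
      gcongr
      norm_num
  refine (abs_dyadicField_sub_le (fun ℓ hℓ => hX.abs_coeff_le hℓ) (fun ℓ _ => hM ℓ r hr)
    (fun ℓ _ => hM ℓ s hs) hdiff).trans (le_of_eq ?_)
  rw [show (4 : ℝ) ^ n = 2 ^ n * 2 ^ n by rw [← mul_pow]; norm_num]
  ring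

end IsDyadicSolutionOn

namespace DyadicModel

/-- The sequence `(0, v 0, …, v (N - 1), 0, 0, …)`. -/
def finSeq {N : ℕ} (v : Fin N → ℝ) : ℕ → ℝ
  | 0 => 0
  | ℓ + 1 => if h : ℓ < N then v ⟨ℓ, h⟩ else 0

section FinSeq

variable {N : ℕ}

@[simp] theorem finSeq_zero (v : Fin N → ℝ) : finSeq v 0 = 0 := rfl

theorem finSeq_succ_of_lt (v : Fin N → ℝ) {ℓ : ℕ} (h : ℓ < N) : finSeq v (ℓ + 1) = v ⟨ℓ, h⟩ :=
  dif_pos h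

theorem finSeq_succ_of_le (v : Fin N → ℝ) {ℓ : ℕ} (h : N ≤ ℓ) : finSeq v (ℓ + 1) = 0 :=
  dif_neg h.not_gt

theorem finSeq_sub (v w : Fin N → ℝ) : finSeq (v - w) = finSeq v - finSeq w := by
  funext ℓ
  cases ℓ with
  | zero => simp
  | succ ℓ => by_cases h : ℓ < N <;> simp [finSeq, h]

theorem finSeq_smul (c : ℝ) (v : Fin N → ℝ) : finSeq (c • v) = c • finSeq v := by
  funext ℓ
  cases ℓ with
  | zero => simp
  | succ ℓ => by_cases h : ℓ < N <;> simp [finSeq, h]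

theorem abs_finSeq_le (v : Fin N → ℝ) (ℓ : ℕ) : |finSeq v ℓ| ≤ ‖v‖ := by
  cases ℓ with
  | zero => simp
  | succ ℓ =>
    by_cases h : ℓ < N
    · rw [finSeq_succ_of_lt v h, ← Real.norm_eq_abs]; exact norm_le_pi_norm v _
    · rw [finSeq_succ_of_le v (not_lt.mp h), abs_zero]; exact norm_nonneg v

theorem hasSum_finSeq_succ_sq (v : Fin N → ℝ) :
    HasSum (fun j => finSeq v (j + 1) ^ 2) (∑ i, v i ^ 2) := by
  have h : ∑ i, v i ^ 2 = ∑ j ∈ Finset.range N, finSeq v (j + 1) ^ 2 := by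
    rw [← Fin.sum_univ_eq_sum_range (fun j => finSeq v (j + 1) ^ 2)]
    exact Finset.sum_congr rfl fun i _ => by rw [finSeq_succ_of_lt v i.isLt]
  rw [h]
  exact hasSum_sum_of_ne_finset_zero fun j hj => by
    rw [finSeq_succ_of_le v (by simpa using hj), sq, zero_mul]

end FinSeq

def galerkinField (k : ℕ → ℝ) {N : ℕ} (v : Fin N → ℝ) : Fin N → ℝ :=
  fun i => dyadicField k (finSeq v) (i + 1)

section GalerkinField

variable {k : ℕ → ℝ} {N : ℕ}

theorem galerkinField_smul (c : ℝ) (v : Fin N → ℝ) :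
    galerkinField k (c • v) = c ^ 2 • galerkinField k v := by
  funext i
  simp only [galerkinField, finSeq_smul, dyadicField, Pi.smul_apply, smul_eq_mul]
  ring

theorem sum_mul_galerkinField (hk0 : k 0 = 0) (v : Fin N → ℝ) :
    ∑ i, v i * galerkinField k v i = 0 := by
  have h := sum_mul_dyadicField hk0 (finSeq v) N
  rw [finSeq_succ_of_le v le_rfl, mul_zero, neg_zero,
    ← Fin.sum_univ_eq_sum_range (fun j => finSeq v (j + 1) * dyadicField k (finSeq v) (j + 1))] at h
  rw [← h]
  exact Finset.sum_congr rfl fun i _ => by rw [galerkinField, finSeq_succ_of_lt v i.isLt]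

theorem norm_galerkinField_sub_le {K ρ : ℝ} (hk : ∀ ℓ ≤ N, |k ℓ| ≤ K) {v w : Fin N → ℝ}
    (hv : ‖v‖ ≤ ρ) (hw : ‖w‖ ≤ ρ) :
    ‖galerkinField k v - galerkinField k w‖ ≤ 4 * K * ρ * ‖v - w‖ := by
  have hK : 0 ≤ K := (abs_nonneg _).trans (hk 0 (Nat.zero_le _))
  have hρ : 0 ≤ ρ := (norm_nonneg v).trans hv
  refine (pi_norm_le_iff_of_nonneg (by positivity)).2 fun i => ?_
  rw [Pi.sub_apply, Real.norm_eq_abs]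
  refine abs_dyadicField_sub_le (fun ℓ hℓ => hk ℓ (by omega))
    (fun ℓ _ => (abs_finSeq_le v ℓ).trans hv) (fun ℓ _ => (abs_finSeq_le w ℓ).trans hw)
    (fun ℓ _ => ?_)
  rw [← Pi.sub_apply (finSeq v), ← finSeq_sub]
  exact abs_finSeq_le _ ℓ

theorem norm_galerkinField_le {K ρ : ℝ} (hk : ∀ ℓ ≤ N, |k ℓ| ≤ K) {v : Fin N → ℝ}
    (hv : ‖v‖ ≤ ρ) : ‖galerkinField k v‖ ≤ 4 * K * ρ ^ 2 := by
  have h0 : galerkinField k (0 : Fin N → ℝ) = 0 := by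
    simpa using galerkinField_smul (k := k) 0 (0 : Fin N → ℝ)
  have hρ : 0 ≤ ρ := (norm_nonneg v).trans hv
  have hK : 0 ≤ K := (abs_nonneg _).trans (hk 0 (Nat.zero_le _))
  have h := norm_galerkinField_sub_le hk hv (w := 0) (by simpa using hρ)
  rw [h0, sub_zero, sub_zero] at h
  exact h.trans (by rw [sq, ← mul_assoc]; gcongr)

/-- The field is made globally Lipschitz by a radial cutoff at the initial energy. The cut-off
field is still orthogonal to the position, so the solution keeps its initial energy and the cutoff
is never active along it. -/
theorem exists_galerkin_curve {K : ℝ} (hk0 : k 0 = 0) (hk : ∀ ℓ ≤ N, |k ℓ| ≤ K)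
    (v₀ : Fin N → ℝ) {T : ℝ} (hT : 0 ≤ T) :
    ∃ γ : ℝ → Fin N → ℝ, γ 0 = v₀ ∧ ∀ t ∈ Icc 0 T,
      HasDerivWithinAt γ (galerkinField k (γ t)) (Icc 0 T) t ∧ ∑ i, γ t i ^ 2 = ∑ i, v₀ i ^ 2 := by
  set ρ := √(∑ i, v₀ i ^ 2)
  have hρ : 0 ≤ ρ := Real.sqrt_nonneg _
  have hK : 0 ≤ K := (abs_nonneg _).trans (hk 0 (Nat.zero_le _))
  set f := fun v => galerkinField k (radialRetraction ρ v)
  have hf_le : ∀ v, ‖f v‖ ≤ (4 * K * ρ ^ 2).toNNReal := fun v => by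
    rw [Real.coe_toNNReal _ (by positivity)]
    exact norm_galerkinField_le hk (norm_radialRetraction_le hρ v)
  have hf_lip : LipschitzWith (4 * K * ρ * 2).toNNReal f := by
    refine LipschitzWith.of_dist_le_mul fun v w => ?_
    have h := (lipschitzWith_radialRetraction hρ).dist_le_mul v w
    rw [dist_eq_norm, dist_eq_norm] at h ⊢
    rw [Real.coe_toNNReal _ (by positivity), mul_assoc]
    refine (norm_galerkinField_sub_le hk (norm_radialRetraction_le hρ v)
      (norm_radialRetraction_le hρ w)).trans ?_
    gcongr
    exact_mod_cast h
  have hf_perp : ∀ v, ∑ i, v i * f v i = 0 := fun v => by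
    simp only [f, radialRetraction, galerkinField_smul, Pi.smul_apply, smul_eq_mul,
      mul_left_comm (v _), ← Finset.mul_sum, sum_mul_galerkinField hk0, mul_zero]
  have hpl : IsPicardLindelof (fun _ => f) (⟨0, left_mem_Icc.2 hT⟩ : Icc 0 T) v₀
      ((4 * K * ρ ^ 2).toNNReal * T.toNNReal) 0 (4 * K * ρ ^ 2).toNNReal _ :=
    .of_time_independent (fun v _ => hf_le v) hf_lip.lipschitzOnWith (by simp [hT])
  obtain ⟨γ, hγ0, hγ⟩ := hpl.exists_eq_forall_mem_Icc_hasDerivWithinAt₀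
  have hE : ∀ t ∈ Icc 0 T, ∑ i, γ t i ^ 2 = ∑ i, v₀ i ^ 2 := fun t ht => by
    rw [sum_sq_eq_of_hasDerivWithinAt (convex_Icc 0 T) hf_perp hγ (left_mem_Icc.2 hT) ht]
    exact congrArg (fun v : Fin N → ℝ => ∑ i, v i ^ 2) hγ0
  refine ⟨γ, hγ0, fun t ht => ⟨?_, hE t ht⟩⟩
  have h : HasDerivWithinAt γ (galerkinField k (radialRetraction ρ (γ t))) (Icc 0 T) t := hγ t ht
  rwa [radialRetraction_of_norm_le ((norm_le_sqrt_sum_sq _).trans (by rw [hE t ht]))] at h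

end GalerkinField

section Existence

variable {C : ℝ} {k : ℕ → ℝ}

theorem exists_isDyadicSolutionOn_galerkin (hC : 0 < C) (hk0 : k 0 = 0)
    (hk : ∀ n : ℕ, 1 ≤ n → 0 ≤ k n ∧ k n ≤ C * 2 ^ n) (x : ℕ → ℝ) (N : ℕ) {T : ℝ}
    (hT : 0 ≤ T) :
    ∃ W : ℕ → ℝ → ℝ, IsDyadicSolutionOn C (truncateCoeff N k) W (Icc 0 T) ∧
      (∀ n, 0 < n → n ≤ N → W n 0 = x n) ∧
      ∀ t ∈ Icc 0 T, energy W t = ∑ j ∈ Finset.range N, x (j + 1) ^ 2 := by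
  have hk0N : truncateCoeff N k 0 = 0 := by simp [truncateCoeff, hk0]
  have hkN : ∀ n, 1 ≤ n → 0 ≤ truncateCoeff N k n ∧ truncateCoeff N k n ≤ C * 2 ^ n := by
    intro n hn
    unfold truncateCoeff
    split_ifs
    exacts [hk n hn, ⟨le_rfl, by positivity⟩]
  have hkK : ∀ ℓ ≤ N, |truncateCoeff N k ℓ| ≤ C * 2 ^ N := by
    intro ℓ hℓ
    rcases ℓ.eq_zero_or_pos with rfl | hℓ0
    · rw [hk0N, abs_zero]; positivity
    · rw [abs_of_nonneg (hkN ℓ hℓ0).1]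
      exact (hkN ℓ hℓ0).2.trans (by gcongr; norm_num)
  obtain ⟨γ, hγ0, hγ⟩ := exists_galerkin_curve hk0N hkK (fun i : Fin N => x (i + 1)) hT
  refine ⟨fun n t => finSeq (γ t) n,
    ⟨hC, hk0N, hkN, fun t => rfl, fun n hn t ht => ?_, fun t _ =>
      (hasSum_finSeq_succ_sq (γ t)).summable⟩, fun n hn hnN => ?_, fun t ht => ?_⟩
  · obtain ⟨m, rfl⟩ := Nat.exists_eq_add_of_le' hn
    by_cases h : m < N
    · show HasDerivWithinAt (fun t => finSeq (γ t) (m + 1))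
        (galerkinField (truncateCoeff N k) (γ t) ⟨m, h⟩) (Icc 0 T) t
      simp only [finSeq_succ_of_lt _ h]
      exact hasDerivWithinAt_pi.1 (hγ t ht).1 ⟨m, h⟩
    · have hvanish : ∀ t, finSeq (γ t) (m + 1) = 0 := fun t => finSeq_succ_of_le _ (not_lt.mp h)
      show HasDerivWithinAt (fun t => finSeq (γ t) (m + 1))
        (dyadicField (truncateCoeff N k) (finSeq (γ t)) (m + 1)) (Icc 0 T) t
      rw [dyadicField, Nat.add_sub_cancel, truncateCoeff, if_neg h, hvanish]
      simpa only [hvanish, zero_mul, mul_zero, sub_zero] using hasDerivWithinAt_const t _ _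
  · obtain ⟨m, rfl⟩ := Nat.exists_eq_add_of_le' hn
    simp [finSeq_succ_of_lt _ (Nat.lt_of_succ_le hnN), hγ0]
  · rw [energy, (hasSum_finSeq_succ_sq (γ t)).tsum_eq, (hγ t ht).2,
      Fin.sum_univ_eq_sum_range (fun j => x (j + 1) ^ 2)]

/-- The Taylor estimates of the Galerkin approximations are uniform in the truncation level,
hence pass to any pointwise limit. -/
theorem isDyadicSolutionOn_Ici_of_tendsto {l : Filter ℕ} [l.NeBot] (hl : l ≤ atTop)
    {W : ℕ → ℕ → ℝ → ℝ} {X : ℕ → ℝ → ℝ} {E : ℝ} (hC : 0 < C) (hk0 : k 0 = 0)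
    (hk : ∀ n : ℕ, 1 ≤ n → 0 ≤ k n ∧ k n ≤ C * 2 ^ n)
    (hW : ∀ P : ℕ, IsDyadicSolutionOn C (truncateCoeff P k) (W P) (Icc 0 P))
    (hE : ∀ P : ℕ, ∀ t ∈ Icc (0 : ℝ) P, energy (W P) t ≤ E) (hX0 : ∀ t, X 0 t = 0)
    (hlim : ∀ n t, 0 ≤ t → Tendsto (fun P => W P n t) l (𝓝 (X n t))) :
    IsDyadicSolutionOn C k X (Ici 0) := by
  have hev : ∀ (t : ℝ) (n : ℕ), ∀ᶠ P : ℕ in l, t ≤ P ∧ n < P := fun t n =>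
    hl <| ((eventually_ge_atTop ⌈t⌉₊).and (eventually_gt_atTop n)).mono fun P hP =>
      ⟨(Nat.le_ceil t).trans (by exact_mod_cast hP.1), hP.2⟩
  have hM : ∀ P : ℕ, ∀ n, ∀ t ∈ Icc (0 : ℝ) P, |W P n t| ≤ √E := fun P n t ht =>
    Real.abs_le_sqrt (((hW P).sq_le_energy ht n).trans (hE P t ht))
  refine ⟨hC, hk0, hk, hX0, fun n hn t ht => ?_, fun t ht => ?_⟩
  · refine hasDerivWithinAt_of_abs_sub_sub_mul_le (K := 32 * C ^ 2 * 4 ^ n * √E ^ 3)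
      fun s hs => ?_
    refine le_of_tendsto (((hlim n s hs).sub (hlim n t ht)).sub
      ((tendsto_dyadicField (fun ℓ => hlim ℓ t ht) k n).const_mul (s - t))).abs ?_
    filter_upwards [hev (max s t) n] with P hP
    rw [← dyadicField_truncateCoeff hP.2]
    exact (hW P).abs_sub_sub_mul_dyadicField_le (convex_Icc _ _) (hM P) hn
      ⟨ht, (le_max_right _ _).trans hP.1⟩ ⟨hs, (le_max_left _ _).trans hP.1⟩
  · refine summable_of_sum_range_le (c := E) (fun j => sq_nonneg _) fun N => ?_
    refine le_of_tendsto (tendsto_finsetSum _ fun j _ => (hlim (j + 1) t ht).pow 2) ?_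
    filter_upwards [hev t 0] with P hP
    have htP : t ∈ Icc (0 : ℝ) P := ⟨ht, hP.1⟩
    exact (((hW P).summable htP).sum_le_tsum _ fun j _ => sq_nonneg _).trans (hE P t htP)

theorem exists_isDyadicSolutionOn_Ici (hC : 0 < C) (hk0 : k 0 = 0)
    (hk : ∀ n : ℕ, 1 ≤ n → 0 ≤ k n ∧ k n ≤ C * 2 ^ n) {x : ℕ → ℝ}
    (hx : Summable fun j : ℕ => x (j + 1) ^ 2) :
    ∃ X : ℕ → ℝ → ℝ, IsDyadicSolutionOn C k X (Ici 0) ∧ ∀ n, 0 < n → X n 0 = x n := by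
  choose W hW hW0 hWE using fun P : ℕ =>
    exists_isDyadicSolutionOn_galerkin hC hk0 hk x P P.cast_nonneg
  set U := hyperfilter ℕ
  have hU : (U : Filter ℕ) ≤ atTop := Nat.cofinite_eq_atTop ▸ hyperfilter_le_cofinite
  set E := ∑' j, x (j + 1) ^ 2
  have hE : ∀ P : ℕ, ∀ t ∈ Icc (0 : ℝ) P, energy (W P) t ≤ E := fun P t ht =>
    (hWE P t ht).trans_le (hx.sum_le_tsum _ fun j _ => sq_nonneg _)
  set X : ℕ → ℝ → ℝ := fun n t => limUnder (U : Filter ℕ) fun P => W P n t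
  have hlim : ∀ n t, 0 ≤ t → Tendsto (fun P => W P n t) U (𝓝 (X n t)) := by
    refine fun n t ht => tendsto_nhds_limUnder (exists_tendsto_of_eventually_abs_le (M := √E) ?_)
    filter_upwards [hU (eventually_ge_atTop ⌈t⌉₊)] with P hP
    have htP : t ∈ Icc (0 : ℝ) P := ⟨ht, (Nat.le_ceil t).trans (by exact_mod_cast hP)⟩
    exact Real.abs_le_sqrt (((hW P).sq_le_energy htP n).trans (hE P t htP))
  have hX0 : ∀ t, X 0 t = 0 := fun t =>
    (tendsto_const_nhds.congr fun P => ((hW P).apply_zero t).symm).limUnder_eq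
  refine ⟨X, isDyadicSolutionOn_Ici_of_tendsto hU hC hk0 hk hW hE hX0 hlim, fun n hn => ?_⟩
  refine (tendsto_const_nhds.congr' ?_).limUnder_eq
  filter_upwards [hU (eventually_ge_atTop n)] with P hP
  exact (hW0 P n hn hP).symm

end Existence

end DyadicModel

/-- for nonnegative initial data in `l²` there exists exactly one
global solution, and it is a Leray-Hopf solution. -/
theorem wellposedness_positive_initial_condition
    (C : ℝ) (k : ℕ → ℝ) (hC : 0 < C) (hk0 : k 0 = 0)
    (hk : ∀ n : ℕ, 1 ≤ n → 0 ≤ k n ∧ k n ≤ C * 2 ^ n)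
    (x : ℕ → ℝ) (hx0 : x 0 = 0) (hx : Summable fun j : ℕ => x (j + 1) ^ 2)
    (hpos : ∀ n : ℕ, 0 ≤ x n) :
    (∃ X : ℕ → ℝ → ℝ,
      IsDyadicSolutionOn C k X (Set.Ici 0) ∧
      (∀ n : ℕ, X n 0 = x n) ∧
      (∀ s ∈ Set.Ici (0 : ℝ), ∀ t ∈ Set.Ici (0 : ℝ), s < t →
        energy X t ≤ energy X s)) ∧
    (∀ X Y : ℕ → ℝ → ℝ,
      IsDyadicSolutionOn C k X (Set.Ici 0) → (∀ n : ℕ, X n 0 = x n) →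
      IsDyadicSolutionOn C k Y (Set.Ici 0) → (∀ n : ℕ, Y n 0 = x n) →
      ∀ n : ℕ, ∀ t ∈ Set.Ici (0 : ℝ), X n t = Y n t) := by
  obtain ⟨X, hX, hXx⟩ := exists_isDyadicSolutionOn_Ici hC hk0 hk hx
  have hX0 : ∀ n, X n 0 = x n := fun n => by
    rcases n.eq_zero_or_pos with rfl | hn
    exacts [(hX.apply_zero 0).trans hx0.symm, hXx n hn]
  have hXpos : ∀ n, ∀ t ∈ Ici (0 : ℝ), 0 ≤ X n t := fun n t ht =>
    hX.nonneg (fun n => hX0 n ▸ hpos n) n ht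
  refine ⟨⟨X, hX, hX0, fun s hs t ht hst =>
    hX.energy_antitoneOn (convex_Ici 0) hXpos hs ht hst.le⟩, ?_⟩
  intro X Y hX hXx hY hYx n t ht
  exact hX.eq_of_nonneg hY (fun n => (hXx n).trans (hYx n).symm) (fun n => hXx n ▸ hpos n) n ht
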